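/- arXiv:2110.10314 — 2 statements merged into one kernel-verified Lean document; each statement's English description precedes it below -/
import Mathlib

section
/- Let C₀ > 0, M > 0, a ≥ 0, and ψ ∈ L¹ nonnegative with admissible k ≥ 0 meaning 4∫_{B_k}ψ < C₀ where B_k = {ψ ≥ k}. Suppose ρ : [0,T] → [0, 2a] is C¹ with ρ' ≤ −C₀ρ² + ρ(2a∫_{B_k}ψ + Mk) on [0,T], ρ(0) ≤ a, and a ≥ 2Mk/C₀. Then ρ(t) ≤ a for all t ∈ [0,T]. -/
open MeasureTheory

theorem bootstrap_step
    (ψ : ℝ → ℝ) (hψi : Integrable ψ) (hψ0 : ∀ x, 0 ≤ ψ x)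
    (C₀ M a k T : ℝ) (hC : 0 < C₀) (hM : 0 < M) (ha : 0 ≤ a) (hk : 0 ≤ k)
    (hadm : 4 * (∫ x in {x : ℝ | k ≤ ψ x}, ψ x) < C₀)
    (ρ ρ' : ℝ → ℝ)
    (hderiv : ∀ t ∈ Set.Icc 0 T, HasDerivAt ρ (ρ' t) t)
    (hrange : ∀ t ∈ Set.Icc 0 T, ρ t ∈ Set.Icc 0 (2 * a))
    (hineq : ∀ t ∈ Set.Icc 0 T,
      ρ' t ≤ -C₀ * (ρ t) ^ 2 + ρ t * (2 * a * (∫ x in {x : ℝ | k ≤ ψ x}, ψ x) + M * k))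
    (hρ0 : ρ 0 ≤ a) (haM : 2 * M * k / C₀ ≤ a) :
    ∀ t ∈ Set.Icc 0 T, ρ t ≤ a := by
  rcases eq_or_lt_of_le ha with rfl | hapos
  · intro t ht
    simpa using (hrange t ht).2
  set I : ℝ := ∫ x in {x : ℝ | k ≤ ψ x}, ψ x with hI
  have hI0 : 0 ≤ I := integral_nonneg fun x => hψ0 x
  have key : ∀ x ∈ Set.Ico 0 T, ρ x = a → ρ' x < 0 := by
    intro x hx hρx
    have h1 := hineq x (Set.mem_Icc_of_Ico hx)
    rw [hρx] at h1
    have hMk : M * k ≤ a * C₀ / 2 := by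
      rw [div_le_iff₀ hC] at haM; nlinarith
    have h2aI : 2 * a * I < a * C₀ / 2 := by nlinarith
    nlinarith
  intro t ht
  have := image_le_of_deriv_right_lt_deriv_boundary (f := ρ) (f' := ρ') (a := 0) (b := T)
    (B := fun _ => a) (B' := fun _ => 0)
    (fun x hx => (hderiv x hx).continuousAt.continuousWithinAt)
    (fun x hx => (hderiv x (Set.mem_Icc_of_Ico hx)).hasDerivWithinAt)
    hρ0 (fun _ => hasDerivAt_const _ _) key
  exact this ht
end

section
/- Let ρ₀ > 0, G₀ > 0, C₀ = G₀/ρ₀, and let ρ : [0,∞) → (0,∞), G : [0,∞) → ℝ satisfy G = C₀ρ and ρ' = −C₀ρ² + ρ·h with continuous h satisfying 0 ≤ h(t) ≤ γ. Then G(t) ≤ max{G₀, γ} for all t ≥ 0. -/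
/-!
Since `G = C₀ ρ`, it suffices to keep `ρ` below `M = max G₀ γ / C₀`. Above that level the
Riccati right-hand side `ρ (h - C₀ ρ)` is negative, because `h ≤ γ ≤ C₀ M`, so `ρ`, which starts
at `ρ₀ = G₀ / C₀ ≤ M`, can never cross it.
-/

/-- The constant functions `M' > M` are barriers: `f` cannot reach `M'` with a nonnegative
derivative, so Mathlib's fencing theorem keeps `f` below every such `M'`. -/
theorem le_of_hasDerivAt_neg_above {f f' : ℝ → ℝ} {a M : ℝ}
    (hf : ∀ x, a ≤ x → HasDerivAt f (f' x) x) (ha : f a ≤ M)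
    (hneg : ∀ x, a ≤ x → M < f x → f' x < 0) :
    ∀ x, a ≤ x → f x ≤ M := by
  intro x hx
  refine le_of_forall_gt_imp_ge_of_dense fun M' hM' => ?_
  exact image_le_of_deriv_right_lt_deriv_boundary (B := fun _ => M') (B' := fun _ => 0)
    (fun y hy => (hf y hy.1).continuousAt.continuousWithinAt)
    (fun y hy => (hf y hy.1).hasDerivWithinAt) (ha.trans hM'.le)
    (fun _ => hasDerivAt_const _ _) (fun y hy hyM' => hneg y hy.1 (hyM' ▸ hM'))
    ⟨hx, le_rfl⟩

theorem riccati_le_of_le {c γ M a : ℝ} {ρ h : ℝ → ℝ} (hc : 0 < c) (hM : 0 ≤ M)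
    (hγ : γ ≤ c * M) (ha : ρ a ≤ M) (hh : ∀ t, a ≤ t → h t ≤ γ)
    (hρ : ∀ t, a ≤ t → HasDerivAt ρ (-c * ρ t ^ 2 + ρ t * h t) t) :
    ∀ t, a ≤ t → ρ t ≤ M := by
  refine le_of_hasDerivAt_neg_above hρ ha fun t ht hMt => ?_
  have hρt : 0 < ρ t := hM.trans_lt hMt
  have hfactor_neg : h t - c * ρ t < 0 :=
    sub_neg.2 <| (hh t ht).trans_lt <| hγ.trans_lt <| mul_lt_mul_of_pos_left hMt hc
  calc -c * ρ t ^ 2 + ρ t * h t = ρ t * (h t - c * ρ t) := by ring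
    _ < 0 := mul_neg_of_pos_of_neg hρt hfactor_neg

theorem G_bound_from_ratio_general
    (ρ₀ G₀ C₀ γ : ℝ) (hρ₀ : 0 < ρ₀) (hG₀ : 0 < G₀) (hC : C₀ = G₀ / ρ₀)
    (ρ G h : ℝ → ℝ)
    (hh : ∀ t, 0 ≤ t → 0 ≤ h t ∧ h t ≤ γ)
    (hρ0 : ρ 0 = ρ₀)
    (hGρ : ∀ t, 0 ≤ t → G t = C₀ * ρ t)
    (hderiv : ∀ t, 0 ≤ t → HasDerivAt ρ (-C₀ * (ρ t) ^ 2 + ρ t * h t) t) :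
    ∀ t, 0 ≤ t → G t ≤ max G₀ γ := by
  intro t ht
  have hC₀ : 0 < C₀ := hC ▸ div_pos hG₀ hρ₀
  have hρ₀_eq : ρ₀ = G₀ / C₀ := by rw [hC, div_div_cancel₀ hG₀.ne']
  have hγ : γ ≤ C₀ * (max G₀ γ / C₀) := by
    rw [mul_div_cancel₀ _ hC₀.ne']
    exact le_max_right _ _
  have hstart : ρ 0 ≤ max G₀ γ / C₀ := by
    rw [hρ0, hρ₀_eq]
    gcongr
    exact le_max_left _ _
  have hρ_le : ρ t ≤ max G₀ γ / C₀ :=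
    riccati_le_of_le hC₀ (by positivity) hγ hstart (fun s hs => (hh s hs).2) hderiv t ht
  calc G t = C₀ * ρ t := hGρ t ht
    _ ≤ C₀ * (max G₀ γ / C₀) := by gcongr
    _ = max G₀ γ := mul_div_cancel₀ _ hC₀.ne'

theorem G_bound_from_ratio
    (ρ₀ G₀ C₀ γ : ℝ) (hρ₀ : 0 < ρ₀) (hG₀ : 0 < G₀) (hC : C₀ = G₀ / ρ₀)
    (ρ G h : ℝ → ℝ) (hcont : Continuous h)
    (hh : ∀ t, 0 ≤ t → 0 ≤ h t ∧ h t ≤ γ)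
    (hρpos : ∀ t, 0 ≤ t → 0 < ρ t) (hρ0 : ρ 0 = ρ₀) (hG0 : G 0 = G₀)
    (hGρ : ∀ t, 0 ≤ t → G t = C₀ * ρ t)
    (hderiv : ∀ t, 0 ≤ t → HasDerivAt ρ (-C₀ * (ρ t) ^ 2 + ρ t * h t) t) :
    ∀ t, 0 ≤ t → G t ≤ max G₀ γ :=
  G_bound_from_ratio_general ρ₀ G₀ C₀ γ hρ₀ hG₀ hC ρ G h hh hρ0 hGρ hderiv
end
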